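/- If f ∈ σ(N₁,N₂,N₃) with coefficients q(k,ℓ,m), then its Calderon transform (Cf)(x,y,z) = ∑_{|k|≤N₁,|ℓ|≤N₂,|m|≤N₃} q(k,ℓ,m)·(x+i)^{N₁+k}(x−i)^{N₁−k}(y+i)^{N₂+ℓ}(y−i)^{N₂−ℓ}(z+i)^{N₃+m}(z−i)^{N₃−m} takes only real values on ℝ³ and agrees on ℝ³ with a polynomial p ∈ ℝ[x,y,z] belonging to σ_P(2N₁,2N₂,2N₃), i.e., p has degree at most 2N₁ in x, 2N₂ in y, 2N₃ in z, and p(x,y,z) ≥ 0 for all real x,y,z. -/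

import Mathlib

/-!
With `e^{iα} = (x+i)/(x-i)`, each summand of the Calderon transform equals
`e^{i(kα+ℓβ+mγ)} (x²+1)^{N₁} (y²+1)^{N₂} (z²+1)^{N₃}`, so `Cf(x,y,z) = f(α,β,γ) · ∏ (x²+1)^{Nᵢ}`
is real and nonnegative. `Cf` is the evaluation of a complex polynomial of degree at most `2Nᵢ`
in the `i`-th variable; taking real parts of its coefficients yields a real polynomial with the
same values on `ℝ³` and no larger degrees.
-/

open Complex ComplexOrder MvPolynomial

noncomputable section

/-- The lattice box `Δ(N₁,N₂,N₃)`. -/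
def Dbox (N₁ N₂ N₃ : ℕ) : Finset (ℤ × ℤ × ℤ) :=
  Finset.Icc (-(N₁ : ℤ), -(N₂ : ℤ), -(N₃ : ℤ)) ((N₁ : ℤ), (N₂ : ℤ), (N₃ : ℤ))

/-- The character `exp(i(kα + ℓβ + mγ))`. -/
def eChar (δ : ℤ × ℤ × ℤ) (v : ℝ × ℝ × ℝ) : ℂ :=
  Complex.exp (Complex.I *
    ((δ.1 : ℂ) * (v.1 : ℂ) + (δ.2.1 : ℂ) * (v.2.1 : ℂ) + (δ.2.2 : ℂ) * (v.2.2 : ℂ)))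

/-- The summand `(x+i)^{N₁+k}(x−i)^{N₁−k}(y+i)^{N₂+ℓ}(y−i)^{N₂−ℓ}(z+i)^{N₃+m}(z−i)^{N₃−m}` of
the Calderon transform. -/
def calderonTerm (N₁ N₂ N₃ : ℕ) (δ : ℤ × ℤ × ℤ) (x y z : ℝ) : ℂ :=
  ((x : ℂ) + Complex.I) ^ (((N₁ : ℤ) + δ.1).toNat) * ((x : ℂ) - Complex.I) ^ (((N₁ : ℤ) - δ.1).toNat) *
  ((y : ℂ) + Complex.I) ^ (((N₂ : ℤ) + δ.2.1).toNat) * ((y : ℂ) - Complex.I) ^ (((N₂ : ℤ) - δ.2.1).toNat) *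
  ((z : ℂ) + Complex.I) ^ (((N₃ : ℤ) + δ.2.2).toNat) * ((z : ℂ) - Complex.I) ^ (((N₃ : ℤ) - δ.2.2).toNat)

namespace MvPolynomial

variable {σ : Type*}

def rePart (P : MvPolynomial σ ℂ) : MvPolynomial σ ℝ :=
  ∑ s ∈ P.support, monomial s (P.coeff s).re

theorem eval_rePart (P : MvPolynomial σ ℂ) (x : σ → ℝ) :
    eval x (rePart P) = (eval (fun i => (x i : ℂ)) P).re := by
  rw [rePart, map_sum, eval_eq, re_sum]
  refine Finset.sum_congr rfl fun s _ => ?_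
  have hprod : ∏ i ∈ s.support, (x i : ℂ) ^ s i = ((s.prod fun i e => x i ^ e : ℝ) : ℂ) := by
    simp [Finsupp.prod]
  rw [eval_monomial, hprod, re_mul_ofReal]

theorem degreeOf_rePart_le (P : MvPolynomial σ ℂ) (i : σ) :
    (rePart P).degreeOf i ≤ P.degreeOf i := by
  refine (degreeOf_sum_le _ _ _).trans (Finset.sup_le fun s hs => ?_)
  rcases eq_or_ne (P.coeff s).re 0 with h | h
  · simp [h]
  · exact (degreeOf_monomial_eq s i h).trans_le (monomial_le_degreeOf i hs)

theorem degreeOf_X_add_C_pow_le {R : Type*} [CommSemiring R] [Nontrivial R] [DecidableEq σ]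
    (i j : σ) (a : R) (n : ℕ) :
    ((X j + C a) ^ n).degreeOf i ≤ if i = j then n else 0 := by
  have hlin : (X j + C a).degreeOf i ≤ if i = j then 1 else 0 :=
    (degreeOf_add_le _ _ _).trans (by simp [degreeOf_X])
  refine (degreeOf_pow_le _ _ _).trans ?_
  split_ifs at hlin ⊢ <;> simpa using Nat.mul_le_mul_left n hlin

end MvPolynomial

lemma mem_Dbox_iff {N₁ N₂ N₃ : ℕ} {δ : ℤ × ℤ × ℤ} :
    δ ∈ Dbox N₁ N₂ N₃ ↔ |δ.1| ≤ N₁ ∧ |δ.2.1| ≤ N₂ ∧ |δ.2.2| ≤ N₃ := by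
  simp only [Dbox, Finset.mem_Icc, Prod.le_def, abs_le]
  tauto

def cayleyAngle (x : ℝ) : ℝ :=
  arg ((x + I) / (x - I))

lemma ofReal_add_I_ne_zero (x : ℝ) : (x : ℂ) + I ≠ 0 := by
  intro h
  simpa using congrArg im h

lemma ofReal_sub_I_ne_zero (x : ℝ) : (x : ℂ) - I ≠ 0 := by
  intro h
  simpa using congrArg im h

lemma exp_cayleyAngle_mul_I (x : ℝ) : exp (cayleyAngle x * I) = (x + I) / (x - I) := by
  have hconj : starRingEnd ℂ ((x : ℂ) + I) = x - I := by simp [sub_eq_add_neg]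
  have hnorm : ‖((x : ℂ) + I) / (x - I)‖ = 1 := by
    rw [norm_div, ← hconj, norm_conj, div_self (norm_ne_zero_iff.mpr (ofReal_add_I_ne_zero x))]
  have h := norm_mul_exp_arg_mul_I (((x : ℂ) + I) / (x - I))
  rwa [hnorm, ofReal_one, one_mul] at h

lemma add_I_pow_mul_sub_I_pow {N : ℕ} {k : ℤ} (hk : |k| ≤ N) (x : ℝ) :
    ((x : ℂ) + I) ^ ((N : ℤ) + k).toNat * ((x : ℂ) - I) ^ ((N : ℤ) - k).toNat
      = exp (I * (k * cayleyAngle x)) * ((x ^ 2 + 1 : ℝ) : ℂ) ^ N := by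
  obtain ⟨hk₁, hk₂⟩ := abs_le.mp hk
  have hexp : exp (I * (k * cayleyAngle x)) = (((x : ℂ) + I) / (x - I)) ^ k := by
    rw [← exp_cayleyAngle_mul_I, ← exp_int_mul]
    ring_nf
  have hnorm : ((x : ℂ) + I) * (x - I) = ((x ^ 2 + 1 : ℝ) : ℂ) := by
    push_cast
    linear_combination -I_sq
  rw [hexp, ← zpow_natCast, ← zpow_natCast, Int.toNat_of_nonneg (by omega),
    Int.toNat_of_nonneg (by omega), zpow_add₀ (ofReal_add_I_ne_zero x),
    zpow_sub₀ (ofReal_sub_I_ne_zero x), div_zpow, ← hnorm, mul_pow, zpow_natCast, zpow_natCast]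
  ring

lemma calderonTerm_eq_eChar_mul {N₁ N₂ N₃ : ℕ} {δ : ℤ × ℤ × ℤ} (hδ : δ ∈ Dbox N₁ N₂ N₃)
    (x y z : ℝ) :
    calderonTerm N₁ N₂ N₃ δ x y z
      = eChar δ (cayleyAngle x, cayleyAngle y, cayleyAngle z)
        * (((x ^ 2 + 1) ^ N₁ * (y ^ 2 + 1) ^ N₂ * (z ^ 2 + 1) ^ N₃ : ℝ) : ℂ) := by
  obtain ⟨h₁, h₂, h₃⟩ := mem_Dbox_iff.mp hδ
  have hsplit : calderonTerm N₁ N₂ N₃ δ x y z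
      = ((x + I) ^ ((N₁ : ℤ) + δ.1).toNat * (x - I) ^ ((N₁ : ℤ) - δ.1).toNat)
        * ((y + I) ^ ((N₂ : ℤ) + δ.2.1).toNat * (y - I) ^ ((N₂ : ℤ) - δ.2.1).toNat)
        * ((z + I) ^ ((N₃ : ℤ) + δ.2.2).toNat * (z - I) ^ ((N₃ : ℤ) - δ.2.2).toNat) := by
    rw [calderonTerm]
    ring
  rw [hsplit, add_I_pow_mul_sub_I_pow h₁, add_I_pow_mul_sub_I_pow h₂, add_I_pow_mul_sub_I_pow h₃,
    eChar, mul_add, mul_add, exp_add, exp_add]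
  push_cast
  ring

lemma sum_mul_calderonTerm_eq (N₁ N₂ N₃ : ℕ) (q : ℤ × ℤ × ℤ → ℂ) (x y z : ℝ) :
    ∑ δ ∈ Dbox N₁ N₂ N₃, q δ * calderonTerm N₁ N₂ N₃ δ x y z
      = (∑ δ ∈ Dbox N₁ N₂ N₃, q δ * eChar δ (cayleyAngle x, cayleyAngle y, cayleyAngle z))
        * (((x ^ 2 + 1) ^ N₁ * (y ^ 2 + 1) ^ N₂ * (z ^ 2 + 1) ^ N₃ : ℝ) : ℂ) := by
  rw [Finset.sum_mul]
  refine Finset.sum_congr rfl fun δ hδ => ?_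
  rw [calderonTerm_eq_eChar_mul hδ, ← mul_assoc]

def calderonFactor {σ : Type*} (j : σ) (N : ℕ) (k : ℤ) : MvPolynomial σ ℂ :=
  (X j + C I) ^ ((N : ℤ) + k).toNat * (X j - C I) ^ ((N : ℤ) - k).toNat

lemma degreeOf_calderonFactor_le {σ : Type*} [DecidableEq σ] (i j : σ) {N : ℕ} {k : ℤ}
    (hk : |k| ≤ N) : (calderonFactor j N k).degreeOf i ≤ if i = j then 2 * N else 0 := by
  obtain ⟨hk₁, hk₂⟩ := abs_le.mp hk
  refine (degreeOf_mul_le _ _ _).trans ?_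
  have hI := degreeOf_X_add_C_pow_le i j I ((N : ℤ) + k).toNat
  have hnegI := degreeOf_X_add_C_pow_le i j (-I) ((N : ℤ) - k).toNat
  rw [C_neg, ← sub_eq_add_neg] at hnegI
  split_ifs at hI hnegI ⊢ <;> omega

def calderonPoly (N₁ N₂ N₃ : ℕ) (q : ℤ × ℤ × ℤ → ℂ) : MvPolynomial (Fin 3) ℂ :=
  ∑ δ ∈ Dbox N₁ N₂ N₃,
    C (q δ) * (calderonFactor 0 N₁ δ.1 * calderonFactor 1 N₂ δ.2.1 * calderonFactor 2 N₃ δ.2.2)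

lemma degreeOf_calderonPoly_le (N₁ N₂ N₃ : ℕ) (q : ℤ × ℤ × ℤ → ℂ) (i : Fin 3) :
    (calderonPoly N₁ N₂ N₃ q).degreeOf i ≤ 2 * ![N₁, N₂, N₃] i := by
  refine (degreeOf_sum_le _ _ _).trans (Finset.sup_le fun δ hδ => ?_)
  obtain ⟨h₁, h₂, h₃⟩ := mem_Dbox_iff.mp hδ
  refine (degreeOf_C_mul_le _ _ _).trans <| (degreeOf_mul_le _ _ _).trans <|
    add_le_add ((degreeOf_mul_le _ _ _).trans <| add_le_add
      (degreeOf_calderonFactor_le i 0 h₁) (degreeOf_calderonFactor_le i 1 h₂))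
      (degreeOf_calderonFactor_le i 2 h₃) |>.trans ?_
  fin_cases i <;> simp

lemma eval_calderonPoly (N₁ N₂ N₃ : ℕ) (q : ℤ × ℤ × ℤ → ℂ) (x y z : ℝ) :
    eval (fun i => ((![x, y, z] i : ℝ) : ℂ)) (calderonPoly N₁ N₂ N₃ q)
      = ∑ δ ∈ Dbox N₁ N₂ N₃, q δ * calderonTerm N₁ N₂ N₃ δ x y z := by
  simp only [calderonPoly, calderonFactor, calderonTerm, map_sum, map_mul, map_pow, map_add,
    map_sub, eval_X, eval_C]
  refine Finset.sum_congr rfl fun δ _ => ?_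
  simp only [Matrix.cons_val_zero, Matrix.cons_val_one, Matrix.cons_val_two, Matrix.head_cons,
    Matrix.tail_cons]
  ring

theorem calderon_maps_sigma_into_sigmaP (N₁ N₂ N₃ : ℕ) (q : ℤ × ℤ × ℤ → ℂ)
    (f : ℝ × ℝ × ℝ → ℂ) (hf : f = fun v => ∑ δ ∈ Dbox N₁ N₂ N₃, q δ * eChar δ v)
    (hpos : ∀ v, 0 ≤ f v) :
    ∃ p : MvPolynomial (Fin 3) ℝ,
      p.degreeOf 0 ≤ 2 * N₁ ∧ p.degreeOf 1 ≤ 2 * N₂ ∧ p.degreeOf 2 ≤ 2 * N₃ ∧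
      (∀ x y z : ℝ,
        (∑ δ ∈ Dbox N₁ N₂ N₃, q δ * calderonTerm N₁ N₂ N₃ δ x y z)
          = ((eval ![x, y, z] p : ℝ) : ℂ)) ∧
      (∀ x y z : ℝ, 0 ≤ eval ![x, y, z] p) := by
  subst hf
  set P := calderonPoly N₁ N₂ N₃ q
  have hCf_nonneg : ∀ x y z : ℝ, 0 ≤ ∑ δ ∈ Dbox N₁ N₂ N₃, q δ * calderonTerm N₁ N₂ N₃ δ x y z :=
    fun x y z => by
      rw [sum_mul_calderonTerm_eq]
      exact mul_nonneg (hpos _) (zero_le_real.mpr (by positivity))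
  have heval : ∀ x y z : ℝ, eval ![x, y, z] (rePart P)
      = (∑ δ ∈ Dbox N₁ N₂ N₃, q δ * calderonTerm N₁ N₂ N₃ δ x y z).re :=
    fun x y z => by rw [eval_rePart, eval_calderonPoly]
  refine ⟨rePart P, (degreeOf_rePart_le P 0).trans (degreeOf_calderonPoly_le N₁ N₂ N₃ q 0),
    (degreeOf_rePart_le P 1).trans (degreeOf_calderonPoly_le N₁ N₂ N₃ q 1),
    (degreeOf_rePart_le P 2).trans (degreeOf_calderonPoly_le N₁ N₂ N₃ q 2),
    fun x y z => ?_, fun x y z => ?_⟩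
  · rw [heval]
    exact eq_re_of_ofReal_le (hCf_nonneg x y z)
  · rw [heval]
    exact (nonneg_iff.mp (hCf_nonneg x y z)).1
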